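/- Defining F_2(u) = F(u) - u f(u)/(p+1) - F_1(u), there exists a constant C > 0 such that F_2(u) = O( u f(u) / log^2(2+u^2) ) as |u| → ∞. -/

import Mathlib

open Real Filter MeasureTheory

noncomputable def f3 (p a u : ℝ) : ℝ := |u| ^ (p - 1) * u * Real.log (2 + u ^ 2) ^ a

noncomputable def F3 (p a u : ℝ) : ℝ := ∫ v in (0:ℝ)..u, f3 p a v

noncomputable def F3one (p a u : ℝ) : ℝ :=
  -(2 * a / (p + 1) ^ 2) * |u| ^ (p + 1) * Real.log (2 + u ^ 2) ^ (a - 1)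

noncomputable def F3two (p a u : ℝ) : ℝ :=
  F3 p a u - u * f3 p a u / (p + 1) - F3one p a u

lemma base_pos (u : ℝ) : (0:ℝ) < 2 + u ^ 2 := by positivity

lemma Lg_pos (u : ℝ) : 0 < Real.log (2 + u ^ 2) :=
  Real.log_pos (by nlinarith [sq_nonneg u])

lemma cont_f3 (p a : ℝ) (hp : 1 < p) : Continuous (f3 p a) := by
  have h1 : Continuous fun u : ℝ => |u| ^ (p - 1) :=
    continuous_abs.rpow_const (fun x => Or.inr (by linarith))
  have h2 : Continuous fun u : ℝ => Real.log (2 + u ^ 2) ^ a := by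
    refine Continuous.rpow_const ?_ (fun x => Or.inl (Lg_pos x).ne')
    exact (continuous_const.add (continuous_pow 2)).log (fun x => (base_pos x).ne')
  exact (h1.mul continuous_id).mul h2

lemma hasDerivAt_F3 (p a : ℝ) (hp : 1 < p) (b : ℝ) : HasDerivAt (F3 p a) (f3 p a b) b := by
  have hc := cont_f3 p a hp
  exact intervalIntegral.integral_hasDerivAt_right (hc.intervalIntegrable 0 b)
    (hc.stronglyMeasurableAtFilter _ _) hc.continuousAt

lemma f3_odd (p a u : ℝ) : f3 p a (-u) = -(f3 p a u) := by
  unfold f3; rw [abs_neg, neg_sq]; ring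

lemma F3_even (p a u : ℝ) (hp : 1 < p) : F3 p a (-u) = F3 p a u := by
  have h := intervalIntegral.integral_comp_neg (a := (0:ℝ)) (b := u) (f3 p a)
  simp only [f3_odd, intervalIntegral.integral_neg, neg_neg] at h
  rw [F3, F3]
  rw [show (-u : ℝ) = -u from rfl]
  have h2 : ∫ x in (-u)..(-(0:ℝ)), f3 p a x = -(∫ x in (0:ℝ)..(-u), f3 p a x) := by
    rw [neg_zero, intervalIntegral.integral_symm]
  rw [h2] at h
  linarith

lemma F3two_even (p a u : ℝ) (hp : 1 < p) : F3two p a (-u) = F3two p a u := by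
  unfold F3two F3one f3
  rw [F3_even p a u hp, abs_neg, neg_sq]
  ring

lemma hasDerivAt_Lg (u : ℝ) :
    HasDerivAt (fun v : ℝ => Real.log (2 + v ^ 2)) ((2 + u ^ 2)⁻¹ * (2 * u)) u := by
  have h1 : HasDerivAt (fun v : ℝ => 2 + v ^ 2) (2 * u) u := by
    simpa using (hasDerivAt_pow 2 u).const_add 2
  exact (Real.hasDerivAt_log (base_pos u).ne').comp u h1

lemma hasDerivAt_Lgb (b u : ℝ) :
    HasDerivAt (fun v : ℝ => Real.log (2 + v ^ 2) ^ b)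
      (b * Real.log (2 + u ^ 2) ^ (b - 1) * ((2 + u ^ 2)⁻¹ * (2 * u))) u :=
  by
    have h := (Real.hasDerivAt_rpow_const (p := b) (Or.inl (Lg_pos u).ne')).comp u (hasDerivAt_Lg u)
    exact h

/-- product term derivative: `v ^ c * L v ^ b` for `u ≠ 0`. -/

lemma hasDerivAt_AB (c b u : ℝ) (hu : u ≠ 0) :
    HasDerivAt (fun v : ℝ => v ^ c * Real.log (2 + v ^ 2) ^ b)
      (c * u ^ (c - 1) * Real.log (2 + u ^ 2) ^ b
        + u ^ c * (b * Real.log (2 + u ^ 2) ^ (b - 1) * ((2 + u ^ 2)⁻¹ * (2 * u)))) u :=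
  (Real.hasDerivAt_rpow_const (Or.inl hu)).mul (hasDerivAt_Lgb b u)

noncomputable def rfun (p a u : ℝ) : ℝ :=
  (4 * a / (p + 1)) * (u ^ p * Real.log (2 + u ^ 2) ^ (a - 1) / (2 + u ^ 2))
    + (4 * a * (a - 1) / (p + 1) ^ 2) * (u ^ 2 / (2 + u ^ 2))
        * (u ^ p * Real.log (2 + u ^ 2) ^ (a - 2))

lemma hasDerivAt_F3two (p a : ℝ) (hp : 1 < p) {u : ℝ} (hu : 0 < u) :
    HasDerivAt (F3two p a) (rfun p a u) u := by
  have hA := hasDerivAt_AB (p + 1) a u hu.ne'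
  have hB := hasDerivAt_AB (p + 1) (a - 1) u hu.ne'
  have hg := (((hasDerivAt_F3 p a hp u).sub (hA.div_const (p + 1))).add
    (hB.const_mul (2 * a / (p + 1) ^ 2)))
  have heq : F3two p a =ᶠ[nhds u]
      fun v => F3 p a v - v ^ (p + 1) * Real.log (2 + v ^ 2) ^ a / (p + 1)
        + 2 * a / (p + 1) ^ 2 * (v ^ (p + 1) * Real.log (2 + v ^ 2) ^ (a - 1)) := by
    filter_upwards [Ioi_mem_nhds hu] with v hv
    have hv' : (0:ℝ) < v := hv
    unfold F3two F3one f3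
    rw [abs_of_pos hv']
    have h1 : v * (v ^ (p - 1) * v * Real.log (2 + v ^ 2) ^ a)
        = v ^ (p + 1) * Real.log (2 + v ^ 2) ^ a := by
      rw [show p + 1 = (p - 1) + 1 + 1 by ring, Real.rpow_add hv', Real.rpow_add hv',
        Real.rpow_one]
      ring
    have h2 : v ^ (p + 1) = v ^ (p + 1) := rfl
    rw [h1]; ring
  have hder := hg.congr_of_eventuallyEq heq
  refine hder.congr_deriv ?_
  symm
  -- algebra
  have hL := Lg_pos u
  set L := Real.log (2 + u ^ 2) with hLdef
  have hb := base_pos u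
  have hp1 : p + 1 ≠ 0 := by linarith
  have e1 : u ^ (p + 1 - 1) = u ^ (p - 1) * u := by
    rw [show p + 1 - 1 = (p - 1) + 1 by ring, Real.rpow_add hu, Real.rpow_one]
  have hu2 : u ^ ((2:ℕ):ℝ) = u ^ (2:ℕ) := Real.rpow_natCast u 2
  have hL2 : L ^ ((2:ℕ):ℝ) = L ^ (2:ℕ) := Real.rpow_natCast L 2
  push_cast at hu2 hL2
  have e2 : u ^ (p + 1) = u ^ (p - 1) * u ^ 2 := by
    have h := Real.rpow_add hu (p - 1) 2
    rw [show p - 1 + 2 = p + 1 by ring, hu2] at h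
    exact h
  have e3 : u ^ p = u ^ (p - 1) * u := by
    have h := Real.rpow_add hu (p - 1) 1
    rw [show p - 1 + 1 = p by ring, Real.rpow_one] at h
    exact h
  have e4 : L ^ a = L ^ (a - 2) * L ^ 2 := by
    have h := Real.rpow_add hL (a - 2) 2
    rw [show a - 2 + 2 = a by ring, hL2] at h
    exact h
  have e5 : L ^ (a - 1) = L ^ (a - 2) * L := by
    have h := Real.rpow_add hL (a - 2) 1
    rw [show a - 2 + 1 = a - 1 by ring, Real.rpow_one] at h
    exact h
  have e6 : L ^ (a - 1 - 1) = L ^ (a - 2) := by rw [show a - 1 - 1 = a - 2 by ring]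
  unfold rfun f3
  rw [abs_of_pos hu]
  rw [e1, e2, e3, e4, e5, e6, ← hLdef]
  field_simp
  ring

noncomputable def Hf (p a v : ℝ) : ℝ := v ^ (p + 1) * Real.log (2 + v ^ 2) ^ (a - 2)

noncomputable def Hder (p a v : ℝ) : ℝ :=
  (p + 1) * v ^ (p + 1 - 1) * Real.log (2 + v ^ 2) ^ (a - 2)
    + v ^ (p + 1) * ((a - 2) * Real.log (2 + v ^ 2) ^ (a - 2 - 1) * ((2 + v ^ 2)⁻¹ * (2 * v)))

noncomputable def C1 (p a : ℝ) : ℝ := 4 * (|a| + 1) / (p + 1) + 4 * (|a| * |a - 1|) / (p + 1) ^ 2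

lemma C1_pos (p a : ℝ) (hp : 1 < p) : 0 < C1 p a := by
  unfold C1; positivity

lemma key_bounds (p a : ℝ) (hp : 1 < p) {v : ℝ} (hv : 0 < v)
    (hK : 2 * (|a - 2| + 1) ≤ Real.log (2 + v ^ 2)) :
    |rfun p a v| ≤ C1 p a * Hder p a v ∧
      v ^ p * Real.log (2 + v ^ 2) ^ (a - 2) ≤ Hder p a v := by
  have hL : (0:ℝ) < Real.log (2 + v ^ 2) := Lg_pos v
  set L := Real.log (2 + v ^ 2) with hLdef
  have hb : (0:ℝ) < 2 + v ^ 2 := base_pos v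
  have hp1 : (0:ℝ) < p + 1 := by linarith
  set E := v ^ p * L ^ (a - 2) with hEdef
  have hE : 0 < E := mul_pos (Real.rpow_pos_of_pos hv p) (Real.rpow_pos_of_pos hL (a - 2))
  have hLle : L ≤ 2 + v ^ 2 := (Real.log_le_sub_one_of_pos hb).trans (by linarith)
  -- rewrites
  have e1 : v ^ (p + 1 - 1) = v ^ p := by rw [show p + 1 - 1 = p by ring]
  have e2 : v ^ (p + 1) = v ^ p * v := by
    have h := Real.rpow_add hv p 1
    rw [Real.rpow_one] at h; exact h
  have e5 : L ^ (a - 1) = L ^ (a - 2) * L := by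
    have h := Real.rpow_add hL (a - 2) 1
    rw [show a - 2 + 1 = a - 1 by ring, Real.rpow_one] at h; exact h
  have e6 : L ^ (a - 2 - 1) = L ^ (a - 2) * L⁻¹ := by
    have h := Real.rpow_add hL (a - 2) (-1)
    rw [show a - 2 + -1 = a - 2 - 1 by ring, Real.rpow_neg_one] at h; exact h
  -- Hder as E * bracket
  have hHder : Hder p a v = E * ((p + 1) + (a - 2) * (2 * v ^ 2) / ((2 + v ^ 2) * L)) := by
    unfold Hder
    rw [e1, e2, e6, ← hLdef, hEdef]
    field_simp
  -- bracket bound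
  have habs : |(a - 2) * (2 * v ^ 2) / ((2 + v ^ 2) * L)| ≤ 1 := by
    rw [abs_div, abs_mul, abs_of_pos (by positivity : (0:ℝ) < (2 + v ^ 2) * L),
      abs_of_nonneg (by positivity : (0:ℝ) ≤ 2 * v ^ 2)]
    rw [div_le_one (by positivity)]
    nlinarith [abs_nonneg (a - 2), sq_nonneg v, hK, hL]
  have hbr : 1 ≤ (p + 1) + (a - 2) * (2 * v ^ 2) / ((2 + v ^ 2) * L) := by
    have := abs_le.1 habs
    linarith [this.1]
  have hHge : E ≤ Hder p a v := by
    rw [hHder]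
    nlinarith [hE, hbr]
  refine ⟨?_, hHge⟩
  -- bound |rfun|
  have hT1 : v ^ p * L ^ (a - 1) / (2 + v ^ 2) ≤ E := by
    rw [e5, div_le_iff₀ hb]
    nlinarith [mul_le_mul_of_nonneg_left hLle hE.le]
  have hT1nn : 0 ≤ v ^ p * L ^ (a - 1) / (2 + v ^ 2) := by positivity
  have hfrac : v ^ 2 / (2 + v ^ 2) ≤ 1 := by
    rw [div_le_one hb]; nlinarith
  have hfracnn : 0 ≤ v ^ 2 / (2 + v ^ 2) := by positivity
  have habsc1 : |4 * a / (p + 1)| = 4 * |a| / (p + 1) := by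
    rw [abs_div, abs_mul, abs_of_pos hp1]; norm_num
  have habsc2 : |4 * a * (a - 1) / (p + 1) ^ 2| = 4 * (|a| * |a - 1|) / (p + 1) ^ 2 := by
    rw [abs_div, abs_mul, abs_mul, abs_pow, abs_of_pos hp1]; norm_num; ring
  calc |rfun p a v| ≤ |(4 * a / (p + 1)) * (v ^ p * L ^ (a - 1) / (2 + v ^ 2))|
        + |(4 * a * (a - 1) / (p + 1) ^ 2) * (v ^ 2 / (2 + v ^ 2)) * E| := by
        rw [rfun, ← hLdef, ← hEdef]; exact abs_add_le _ _
    _ ≤ (4 * |a| / (p + 1)) * E + (4 * (|a| * |a - 1|) / (p + 1) ^ 2) * 1 * E := by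
        rw [abs_mul, abs_mul, abs_mul, habsc1, habsc2,
          abs_of_nonneg hT1nn, abs_of_nonneg hfracnn, abs_of_pos hE]
        gcongr <;> first
          | exact hT1
          | exact hfrac
          | positivity
    _ ≤ C1 p a * E := by
        unfold C1
        have h4 : 4 * |a| / (p + 1) ≤ 4 * (|a| + 1) / (p + 1) := by
          gcongr
          linarith
        nlinarith [mul_le_mul_of_nonneg_right h4 hE.le]
    _ ≤ C1 p a * Hder p a v := by
        have := C1_pos p a hp
        exact mul_le_mul_of_nonneg_left hHge this.le

lemma cont_Lgb (b : ℝ) : Continuous fun v : ℝ => Real.log (2 + v ^ 2) ^ b := by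
  refine Continuous.rpow_const ?_ (fun x => Or.inl (Lg_pos x).ne')
  exact (continuous_const.add (continuous_pow 2)).log (fun x => (base_pos x).ne')

lemma contOn_rpow (c : ℝ) : ContinuousOn (fun v : ℝ => v ^ c) (Set.Ioi 0) :=
  ContinuousOn.rpow_const continuousOn_id (fun v hv => Or.inl (ne_of_gt hv))

lemma cont_base : Continuous fun v : ℝ => 2 + v ^ 2 :=
  continuous_const.add (continuous_pow 2)

lemma contOn_rfun (p a : ℝ) : ContinuousOn (rfun p a) (Set.Ioi 0) := by
  unfold rfun
  refine ContinuousOn.add ?_ ?_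
  · exact continuousOn_const.mul (((contOn_rpow p).mul
      (cont_Lgb (a - 1)).continuousOn).div cont_base.continuousOn
      (fun v _ => (base_pos v).ne'))
  · exact (continuousOn_const.mul (((continuous_pow 2).continuousOn).div
      cont_base.continuousOn (fun v _ => (base_pos v).ne'))).mul
      ((contOn_rpow p).mul (cont_Lgb (a - 2)).continuousOn)

lemma contOn_Hder (p a : ℝ) : ContinuousOn (Hder p a) (Set.Ioi 0) := by
  unfold Hder
  refine ContinuousOn.add ?_ ?_
  · exact (continuousOn_const.mul (contOn_rpow (p + 1 - 1))).mul
      (cont_Lgb (a - 2)).continuousOn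
  · refine (contOn_rpow (p + 1)).mul ?_
    exact (continuousOn_const.mul (cont_Lgb (a - 2 - 1)).continuousOn).mul
      ((cont_base.continuousOn.inv₀ (fun v _ => (base_pos v).ne')).mul
        (continuousOn_const.mul continuousOn_id))

theorem stmt3 (p a : ℝ) (hp : 1 < p) :
    ∃ C > 0, ∀ᶠ u in (atTop ⊔ atBot : Filter ℝ),
      |F3two p a u| ≤ C * |u * f3 p a u| / Real.log (2 + u ^ 2) ^ 2 := by
  set K : ℝ := 2 * (|a - 2| + 1) with hKdef
  set u0 : ℝ := 1 + Real.exp K with hu0def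
  have hexp : 0 < Real.exp K := Real.exp_pos K
  have hu0 : (0:ℝ) < u0 := by positivity
  have hu01 : (1:ℝ) ≤ u0 := by simp [hu0def]; positivity
  have hKle : ∀ v : ℝ, u0 ≤ v → K ≤ Real.log (2 + v ^ 2) := by
    intro v hv
    have h1 : Real.exp K ≤ v := by
      have := hu01.trans hv
      simp only [hu0def] at hv
      linarith
    have h2 : Real.exp K ≤ 2 + v ^ 2 := by nlinarith [hu01.trans hv]
    calc K = Real.log (Real.exp K) := (Real.log_exp K).symm
      _ ≤ Real.log (2 + v ^ 2) := Real.log_le_log hexp h2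
  -- positivity of Hf u0
  have hHfu0 : 0 < Hf p a u0 :=
    mul_pos (Real.rpow_pos_of_pos hu0 _) (Real.rpow_pos_of_pos (Lg_pos u0) _)
  set C : ℝ := C1 p a + |F3two p a u0| / Hf p a u0 with hCdef
  have hC : 0 < C := by
    have := C1_pos p a hp
    have : 0 ≤ |F3two p a u0| / Hf p a u0 := by positivity
    simp only [hCdef]
    have h1 := C1_pos p a hp
    linarith
  -- main estimate for u ≥ u0
  have key : ∀ u : ℝ, u0 ≤ u → |F3two p a u| ≤ C * Hf p a u := by
    intro u hu
    have hupos : 0 < u := lt_of_lt_of_le hu0 hu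
    have hsub : Set.uIcc u0 u ⊆ Set.Ioi (0:ℝ) := by
      rw [Set.uIcc_of_le hu]
      intro x hx
      exact lt_of_lt_of_le hu0 hx.1
    have hderiv : ∀ x ∈ Set.uIcc u0 u, HasDerivAt (F3two p a) (rfun p a x) x := by
      intro x hx
      exact hasDerivAt_F3two p a hp (hsub hx)
    have hintr : IntervalIntegrable (rfun p a) volume u0 u :=
      ((contOn_rfun p a).mono hsub).intervalIntegrable
    have hftc := intervalIntegral.integral_eq_sub_of_hasDerivAt hderiv hintr
    have hderivH : ∀ x ∈ Set.uIcc u0 u, HasDerivAt (Hf p a) (Hder p a x) x := by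
      intro x hx
      have hx0 : (0:ℝ) < x := hsub hx
      exact hasDerivAt_AB (p + 1) (a - 2) x hx0.ne'
    have hintH : IntervalIntegrable (Hder p a) volume u0 u :=
      ((contOn_Hder p a).mono hsub).intervalIntegrable
    have hftcH := intervalIntegral.integral_eq_sub_of_hasDerivAt hderivH hintH
    have hkb : ∀ x ∈ Set.Icc u0 u, |rfun p a x| ≤ C1 p a * Hder p a x := by
      intro x hx
      have hx0 : (0:ℝ) < x := lt_of_lt_of_le hu0 hx.1
      exact (key_bounds p a hp hx0 (hKle x hx.1)).1
    have hHnn : ∀ x ∈ Set.Icc u0 u, 0 ≤ Hder p a x := by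
      intro x hx
      have hx0 : (0:ℝ) < x := lt_of_lt_of_le hu0 hx.1
      have h := (key_bounds p a hp hx0 (hKle x hx.1)).2
      have : (0:ℝ) ≤ x ^ p * Real.log (2 + x ^ 2) ^ (a - 2) :=
        le_of_lt (mul_pos (Real.rpow_pos_of_pos hx0 _) (Real.rpow_pos_of_pos (Lg_pos x) _))
      linarith
    have hHmono : 0 ≤ Hf p a u - Hf p a u0 := by
      rw [← hftcH]
      exact intervalIntegral.integral_nonneg hu hHnn
    have hstep : |F3two p a u - F3two p a u0| ≤ C1 p a * (Hf p a u - Hf p a u0) := by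
      rw [← hftc, ← hftcH]
      calc |∫ y in u0..u, rfun p a y| ≤ ∫ y in u0..u, |rfun p a y| :=
            intervalIntegral.abs_integral_le_integral_abs hu
        _ ≤ ∫ y in u0..u, C1 p a * Hder p a y := by
            apply intervalIntegral.integral_mono_on hu hintr.abs
              (hintH.const_mul (C1 p a)) hkb
        _ = C1 p a * ∫ y in u0..u, Hder p a y := by
            rw [intervalIntegral.integral_const_mul]
    have h1 : |F3two p a u| ≤ |F3two p a u0| + C1 p a * (Hf p a u - Hf p a u0) := by
      have := abs_sub_abs_le_abs_sub (F3two p a u) (F3two p a u0)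
      linarith [abs_abs (F3two p a u)]
    have h2 : |F3two p a u0| ≤ (|F3two p a u0| / Hf p a u0) * Hf p a u := by
      rw [div_mul_eq_mul_div, le_div_iff₀ hHfu0]
      have hHfu : Hf p a u0 ≤ Hf p a u := by linarith
      exact mul_le_mul_of_nonneg_left hHfu (abs_nonneg _)
    have h3 : C1 p a * (Hf p a u - Hf p a u0) ≤ C1 p a * Hf p a u := by
      have := C1_pos p a hp
      nlinarith [hHfu0]
    simp only [hCdef]
    calc |F3two p a u| ≤ |F3two p a u0| + C1 p a * (Hf p a u - Hf p a u0) := h1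
      _ ≤ (|F3two p a u0| / Hf p a u0) * Hf p a u + C1 p a * Hf p a u := by linarith
      _ = (C1 p a + |F3two p a u0| / Hf p a u0) * Hf p a u := by ring
  -- translation to the target form, for u > 0
  have hform : ∀ u : ℝ, 0 < u →
      C * |u * f3 p a u| / Real.log (2 + u ^ 2) ^ 2 = C * Hf p a u := by
    intro u hu
    have hL : 0 < Real.log (2 + u ^ 2) := Lg_pos u
    have h1 : u * f3 p a u = u ^ (p + 1) * Real.log (2 + u ^ 2) ^ a := by
      rw [f3, abs_of_pos hu]
      rw [show p + 1 = (p - 1) + 1 + 1 by ring, Real.rpow_add hu, Real.rpow_add hu,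
        Real.rpow_one]
      ring
    have h2 : (0:ℝ) ≤ u ^ (p + 1) * Real.log (2 + u ^ 2) ^ a := by positivity
    have hL2 : Real.log (2 + u ^ 2) ^ ((2:ℕ):ℝ) = Real.log (2 + u ^ 2) ^ (2:ℕ) :=
      Real.rpow_natCast _ 2
    push_cast at hL2
    have h3 : Real.log (2 + u ^ 2) ^ (a - 2)
        = Real.log (2 + u ^ 2) ^ a / Real.log (2 + u ^ 2) ^ (2:ℕ) := by
      rw [← hL2, ← Real.rpow_sub hL]
    rw [h1, abs_of_nonneg h2, Hf, h3]
    field_simp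
  refine ⟨C, hC, ?_⟩
  rw [Filter.eventually_sup]
  constructor
  · filter_upwards [Filter.eventually_ge_atTop u0] with u hu
    have hupos : 0 < u := lt_of_lt_of_le hu0 hu
    rw [hform u hupos]
    exact key u hu
  · filter_upwards [Filter.eventually_le_atBot (-u0)] with u hu
    have hw : u0 ≤ -u := by linarith
    have hwpos : 0 < -u := lt_of_lt_of_le hu0 hw
    have e1 : F3two p a u = F3two p a (-u) := by
      rw [← F3two_even p a (-u) hp, neg_neg]
    have e2 : u * f3 p a u = (-u) * f3 p a (-u) := by
      rw [show u = -(-u) by ring]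
      rw [f3_odd]
      ring
    have e3 : (2:ℝ) + u ^ 2 = 2 + (-u) ^ 2 := by ring
    rw [e1, e2, e3, hform (-u) hwpos]
    exact key (-u) hw
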